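/- Let ψ = (ψ₁, ψ₂)ᵀ solve ψ_x = [[-iλ, u],[u, iλ]]ψ and define ∇λ = ψ₂² - ψ₁². Then K·∇λ = λ² J·∇λ, where K = -(1/4)∂³ + ∂ u ∂⁻¹ u ∂ and J = ∂; explicitly, -(1/4)(∇λ)''' + (u·(u·(∇λ)')^{(-1)})' = λ² (∇λ)'. -/

import Mathlib

open Complex

/-- For a solution `ψ` of the MKdV spectral problem, the spectral gradient
`∇λ = ψ₂² - ψ₁²` satisfies the Lenard eigenvalue relation `K·∇λ = λ² J·∇λ`, i.e.
`-(1/4)(∇λ)''' + (u·(u·(∇λ)')^{(-1)})' = λ²(∇λ)'` for a suitable antiderivative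
`(u·(∇λ)')^{(-1)}`. -/
theorem lenard_eigenvalue_relation
    (u : ℝ → ℂ) (lam : ℂ) (ψ₁ ψ₂ : ℝ → ℂ)
    (hu : ContDiff ℝ (⊤ : ℕ∞) u) (h₁ : ContDiff ℝ (⊤ : ℕ∞) ψ₁) (h₂ : ContDiff ℝ (⊤ : ℕ∞) ψ₂)
    (hsys : ∀ x : ℝ,
        deriv ψ₁ x = -I * lam * ψ₁ x + u x * ψ₂ x
      ∧ deriv ψ₂ x = u x * ψ₁ x + I * lam * ψ₂ x) :
    ∃ W : ℝ → ℂ,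
      (∀ x, deriv W x = u x * deriv (fun y => ψ₂ y ^ 2 - ψ₁ y ^ 2) x) ∧
      ∀ x, -(1 / 4) * deriv (deriv (deriv (fun y => ψ₂ y ^ 2 - ψ₁ y ^ 2))) x
            + deriv (fun y => u y * W y) x
          = lam ^ 2 * deriv (fun y => ψ₂ y ^ 2 - ψ₁ y ^ 2) x := by
  have hud : Differentiable ℝ u := hu.differentiable (by simp)
  have h1d : Differentiable ℝ ψ₁ := h₁.differentiable (by simp)
  have h2d : Differentiable ℝ ψ₂ := h₂.differentiable (by simp)
  have hψ₁ : ∀ x, HasDerivAt ψ₁ (-I * lam * ψ₁ x + u x * ψ₂ x) x := by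
    intro x
    have := (h1d x).hasDerivAt
    rwa [(hsys x).1] at this
  have hψ₂ : ∀ x, HasDerivAt ψ₂ (u x * ψ₁ x + I * lam * ψ₂ x) x := by
    intro x
    have := (h2d x).hasDerivAt
    rwa [(hsys x).2] at this
  have hu' : ∀ x, HasDerivAt u (deriv u x) x := fun x => (hud x).hasDerivAt
  have hfun : (fun y => ψ₂ y ^ 2 - ψ₁ y ^ 2) = fun y => ψ₂ y * ψ₂ y - ψ₁ y * ψ₁ y := by
    funext y; ring
  -- first derivative of g = ψ₂² - ψ₁²
  have hg : ∀ x, HasDerivAt (fun y => ψ₂ y * ψ₂ y - ψ₁ y * ψ₁ y)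
      (2 * I * lam * (ψ₁ x * ψ₁ x + ψ₂ x * ψ₂ x)) x := by
    intro x
    have h := ((hψ₂ x).mul (hψ₂ x)).sub ((hψ₁ x).mul (hψ₁ x))
    convert h using 1
    · rfl
    · rfl
    ring
  -- derivative of ψ₁ψ₂
  have hp : ∀ x, HasDerivAt (fun y => ψ₁ y * ψ₂ y)
      (u x * (ψ₁ x * ψ₁ x + ψ₂ x * ψ₂ x)) x := by
    intro x
    have h := (hψ₁ x).mul (hψ₂ x)
    convert h using 1
    · rfl
    · rfl
    ring
  refine ⟨fun x => 2 * I * lam * (ψ₁ x * ψ₂ x), ?_, ?_⟩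
  · intro x
    rw [hfun, ((hp x).const_mul (2 * I * lam)).deriv, (hg x).deriv]
    ring
  · intro x
    rw [hfun]
    have hDg : deriv (fun y => ψ₂ y * ψ₂ y - ψ₁ y * ψ₁ y)
        = fun x => 2 * I * lam * (ψ₁ x * ψ₁ x + ψ₂ x * ψ₂ x) :=
      funext fun x => (hg x).deriv
    -- second derivative
    have hG1 : ∀ x, HasDerivAt (fun x => 2 * I * lam * (ψ₁ x * ψ₁ x + ψ₂ x * ψ₂ x))
        (-4 * lam ^ 2 * (ψ₂ x * ψ₂ x - ψ₁ x * ψ₁ x) + 8 * I * lam * (u x * (ψ₁ x * ψ₂ x))) x := by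
      intro x
      have h := (((hψ₁ x).mul (hψ₁ x)).add ((hψ₂ x).mul (hψ₂ x))).const_mul (2 * I * lam)
      convert h using 1
      · rfl
      · rfl
      linear_combination (4 * lam ^ 2 * (ψ₁ x * ψ₁ x - ψ₂ x * ψ₂ x)) * Complex.I_sq
    have hDDg : deriv (deriv (fun y => ψ₂ y * ψ₂ y - ψ₁ y * ψ₁ y))
        = fun x => -4 * lam ^ 2 * (ψ₂ x * ψ₂ x - ψ₁ x * ψ₁ x)
            + 8 * I * lam * (u x * (ψ₁ x * ψ₂ x)) := by
      funext x
      rw [hDg]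
      exact (hG1 x).deriv
    -- third derivative
    have hG2 : HasDerivAt (fun x => -4 * lam ^ 2 * (ψ₂ x * ψ₂ x - ψ₁ x * ψ₁ x)
          + 8 * I * lam * (u x * (ψ₁ x * ψ₂ x)))
        (-4 * lam ^ 2 * (2 * I * lam * (ψ₁ x * ψ₁ x + ψ₂ x * ψ₂ x))
          + 8 * I * lam * (deriv u x * (ψ₁ x * ψ₂ x)
            + u x * (u x * (ψ₁ x * ψ₁ x + ψ₂ x * ψ₂ x)))) x :=
      ((hg x).const_mul (-4 * lam ^ 2)).add
        (((hu' x).mul (hp x)).const_mul (8 * I * lam))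
    have hUW : HasDerivAt (fun y => u y * (2 * I * lam * (ψ₁ y * ψ₂ y)))
        (deriv u x * (2 * I * lam * (ψ₁ x * ψ₂ x))
          + u x * (2 * I * lam * (u x * (ψ₁ x * ψ₁ x + ψ₂ x * ψ₂ x)))) x :=
      (hu' x).mul ((hp x).const_mul (2 * I * lam))
    rw [hDDg, hG2.deriv, hUW.deriv, (hg x).deriv]
    ring
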